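/- arXiv:math/9811112 — 3 statements merged into one kernel-verified Lean document; each statement's English description precedes it below -/
import Mathlib

section
/- Let n be a sufficiently large integer, let k be a positive integer, and let B and C be positive real numbers with C satisfying 200(log n/log log n)^k < C < n. Suppose that M is a set of positive integers with cardinality greater than C, such that each element m of M is less than B and is the product of k distinct primes none of which divides n. Then for any integer h with 0 < h < n, at least C/2 elements m of M satisfy ‖h·m̄/n‖ > C(log log n)^k/(200·B·(log n)^k), where m̄ denotes the inverse of m modulo n. -/
set_option maxHeartbeats 1000000

open Finset Nat


/-- The distance from a real number to the nearest integer. -/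
noncomputable def distNearestInt (x : ℝ) : ℝ := |x - round x|

/-- `m` is a product of `k` pairwise distinct primes, none of which divides `n`. -/
def IsProdOfDistinctPrimesNotDiv (k m n : ℕ) : Prop :=
  ∃ s : Finset ℕ, s.card = k ∧ (∀ p ∈ s, p.Prime ∧ ¬ p ∣ n) ∧ m = ∏ p ∈ s, p


lemma aux_fact_le_prod (s : Finset ℕ) (hs : ∀ p ∈ s, 2 ≤ p) :
    (s.card + 1)! ≤ ∏ p ∈ s, p := by
  induction s using Finset.induction_on_max with
  | empty => simp
  | insert a s ha ih =>
    have has : a ∉ s := fun h => lt_irrefl a (ha a h)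
    have h2 : ∀ p ∈ s, 2 ≤ p := fun p hp => hs p (Finset.mem_insert_of_mem hp)
    have hsub : s ⊆ Finset.Ico 2 a := by
      intro x hx
      exact Finset.mem_Ico.mpr ⟨h2 x hx, ha x hx⟩
    have hcard : s.card ≤ a - 2 := by
      have := Finset.card_le_card hsub
      rwa [Nat.card_Ico] at this
    have ha2 : 2 ≤ a := hs a (Finset.mem_insert_self a s)
    have haa : s.card + 2 ≤ a := by omega
    rw [Finset.card_insert_of_notMem has, Finset.prod_insert has]
    calc (s.card + 1 + 1)! = (s.card + 2) * (s.card + 1)! := rfl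
    _ ≤ a * ∏ p ∈ s, p := Nat.mul_le_mul haa (ih h2)

lemma aux_pow_le_fact (m : ℕ) : m ^ m ≤ (2 * m)! := by
  have h1 : ∏ i ∈ Finset.Ico 1 (2*m+1), i = (2*m)! := Finset.prod_Ico_id_eq_factorial (2*m)
  have hsub : Finset.Icc (m+1) (2*m) ⊆ Finset.Ico 1 (2*m+1) := by
    intro x hx; simp only [Finset.mem_Icc, Finset.mem_Ico] at *; omega
  have h2 : ∏ i ∈ Finset.Icc (m+1) (2*m), i ≤ ∏ i ∈ Finset.Ico 1 (2*m+1), i :=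
    Finset.prod_le_prod_of_subset_of_one_le' hsub (by intro i hi _; simp only [Finset.mem_Ico] at hi; omega)
  have hcard : (Finset.Icc (m+1) (2*m)).card = m := by
    rw [Nat.card_Icc]; omega
  have h3 : m ^ (Finset.Icc (m+1) (2*m)).card ≤ ∏ i ∈ Finset.Icc (m+1) (2*m), i :=
    Finset.pow_card_le_prod _ _ _ (fun x hx => by have := (Finset.mem_Icc.mp hx).1; omega)
  rw [hcard] at h3
  omega

lemma aux_ratio : ∀ k : ℕ, 3 * 26 ^ k ≤ 100 * 5 ^ k * k ! := by
  have step : ∀ k : ℕ, 5 ≤ k → 3 * 26 ^ k ≤ 100 * 5 ^ k * k ! →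
      3 * 26 ^ (k+1) ≤ 100 * 5 ^ (k+1) * (k+1)! := by
    intro k hk ih
    have : 3 * 26 ^ (k+1) = 26 * (3 * 26 ^ k) := by ring
    rw [this, pow_succ, Nat.factorial_succ]
    calc 26 * (3 * 26 ^ k) ≤ 26 * (100 * 5 ^ k * k !) := Nat.mul_le_mul_left _ ih
    _ ≤ (5 * (k+1)) * (100 * 5 ^ k * k !) := Nat.mul_le_mul_right _ (by omega)
    _ = 100 * (5 ^ k * 5) * ((k+1) * k !) := by ring
  intro k
  induction k with
  | zero => norm_num
  | succ k ih =>
    match k, ih with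
    | 0, _ => norm_num
    | 1, _ => norm_num
    | 2, _ => norm_num [Nat.factorial]
    | 3, _ => norm_num [Nat.factorial]
    | 4, _ => norm_num [Nat.factorial]
    | (k+5), ih => exact step (k+5) (by omega) ih

lemma aux_ratio' (k : ℕ) : ((26:ℝ)/5) ^ k ≤ 100 / 3 * k ! := by
  have h := aux_ratio k
  have h' : (3:ℝ) * 26 ^ k ≤ 100 * 5 ^ k * k ! := by exact_mod_cast h
  have h5 : (0:ℝ) < 5 ^ k := by positivity
  have : ((26:ℝ)/5)^k = 26^k / 5^k := by rw [div_pow]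
  rw [this, div_le_iff₀ h5]
  nlinarith [h']

theorem stmt0 :
    ∃ n₀ : ℕ, ∀ n : ℕ, n₀ ≤ n →
    ∀ k : ℕ, 0 < k →
    ∀ B C : ℝ, 0 < B → 0 < C →
    200 * (Real.log n / Real.log (Real.log n)) ^ k < C → C < n →
    ∀ M : Finset ℕ,
      C < (M.card : ℝ) →
      (∀ m ∈ M, 0 < m ∧ (m : ℝ) < B ∧ IsProdOfDistinctPrimesNotDiv k m n) →
    ∀ h : ℕ, 0 < h → h < n →
    ∃ M' ⊆ M, C / 2 ≤ (M'.card : ℝ) ∧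
      ∀ m ∈ M',
        C * Real.log (Real.log n) ^ k / (200 * B * Real.log n ^ k) <
          distNearestInt ((h : ℝ) * ((((m : ZMod n)⁻¹).val : ℕ) : ℝ) / n) := by
  classical
  have H : ∀ᶠ n : ℕ in Filter.atTop, 200 ≤ Real.log (Real.log n) := by
    have t1 : Filter.Tendsto (fun n : ℕ => Real.log (Real.log n)) Filter.atTop Filter.atTop :=
      Real.tendsto_log_atTop.comp (Real.tendsto_log_atTop.comp tendsto_natCast_atTop_atTop)
    exact t1.eventually_ge_atTop 200
  obtain ⟨n₀, hn₀⟩ := Filter.eventually_atTop.mp (H.and (Filter.eventually_ge_atTop 2))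
  refine ⟨n₀, fun n hn k hk B C hB hC hCl hCn M hMC hM h hh hhn => ?_⟩
  obtain ⟨hx200, hn2⟩ := hn₀ n hn
  haveI : NeZero n := ⟨by omega⟩
  set Ln : ℝ := Real.log n with hLn_def
  set x : ℝ := Real.log Ln with hx_def
  have hnR : (2:ℝ) ≤ (n:ℝ) := by exact_mod_cast hn2
  have hnRpos : (0:ℝ) < n := by linarith
  -- basic log facts
  have hLn0 : 0 ≤ Ln := Real.log_nonneg (by linarith)
  have hLn1 : 1 < Ln := by
    by_contra hc
    push_neg at hc
    have : x ≤ 0 := Real.log_nonpos hLn0 hc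
    linarith
  have hLnexp : Ln = Real.exp x := (Real.exp_log (by linarith)).symm
  have hx0 : (0:ℝ) < x := by linarith
  have hLn50x : 50 * x ≤ Ln := by
    have h1 : x/2 + 1 ≤ Real.exp (x/2) := Real.add_one_le_exp _
    have h2 : Real.exp (x/2) * Real.exp (x/2) = Real.exp x := by
      rw [← Real.exp_add]; ring_nf
    nlinarith [Real.exp_pos (x/2)]
  have hxLn : x ≤ Ln := by linarith
  have hLnpos : (0:ℝ) < Ln := by linarith
  set L : ℝ := Ln / x with hL_def
  have hL50 : 50 ≤ L := by
    rw [hL_def, le_div_iff₀ hx0]; linarith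
  have hLpos : 0 < L := by linarith
  -- log x ≤ x / 7
  have hlogx : Real.log x ≤ x / 7 := by
    have hs14 : (14:ℝ) ≤ Real.sqrt x := by
      have : (14:ℝ) = Real.sqrt 196 := by
        rw [show (196:ℝ) = 14^2 by norm_num, Real.sqrt_sq]; norm_num
      rw [this]
      exact Real.sqrt_le_sqrt (by linarith)
    have hss : Real.sqrt x * Real.sqrt x = x := Real.mul_self_sqrt (le_of_lt hx0)
    have h1 : Real.log x = 2 * Real.log (Real.sqrt x) := by
      rw [Real.log_sqrt (le_of_lt hx0)]; ring
    have h2 : Real.log (Real.sqrt x) ≤ Real.sqrt x - 1 :=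
      Real.log_le_sub_one_of_pos (by linarith)
    have h3 : Real.sqrt x ≤ x / 14 := by nlinarith
    nlinarith
  have hlogL : Real.log L = x - Real.log x := by
    rw [hL_def, Real.log_div (ne_of_gt hLnpos) (ne_of_gt hx0), ← hx_def]
  have hlog25L : 0.81 * x ≤ Real.log (2.5 * L) := by
    have h1 : Real.log L ≤ Real.log (2.5 * L) :=
      Real.log_le_log (by linarith) (by linarith)
    rw [hlogL] at h1
    linarith
  -- the threshold
  set δ : ℝ := C * x ^ k / (200 * B * Ln ^ k) with hδ_def
  have hδ0 : 0 ≤ δ := by positivity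
  have hδnB : δ * n * B = C * x ^ k * n / (200 * Ln ^ k) := by
    rw [hδ_def]; field_simp
  have hδnB_le : δ * n * B ≤ (n:ℝ)^2 := by
    rw [hδnB]
    have hxk : x ^ k ≤ Ln ^ k := pow_le_pow_left₀ (le_of_lt hx0) hxLn k
    have hLnk : (0:ℝ) < Ln ^ k := by positivity
    have h1 : C * x ^ k ≤ (n:ℝ) * Ln ^ k :=
      mul_le_mul (le_of_lt hCn) hxk (by positivity) (by linarith)
    rw [div_le_iff₀ (by positivity)]
    calc C * x ^ k * ↑n ≤ ((n:ℝ) * Ln ^ k) * n := by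
          exact mul_le_mul_of_nonneg_right h1 (by linarith)
    _ ≤ (n:ℝ)^2 * (200 * Ln ^ k) := by nlinarith [hLnk, hnRpos]
  -- bound on number of prime factors
  have omega_bd : ∀ v : ℤ, |(v:ℝ)| ≤ δ * n * B →
      ((v.natAbs.primeFactors.card : ℝ)) ≤ 5.2 * L := by
    intro v hv
    by_contra hcon
    push_neg at hcon
    set r := v.natAbs.primeFactors.card with hr_def
    have hrpos : 0 < r := by
      have h0 : (0:ℝ) < (r:ℝ) := lt_trans (by positivity) hcon
      exact_mod_cast h0
    have hvne : v.natAbs ≠ 0 := by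
      intro h0
      have : r = 0 := by rw [hr_def, h0]; simp
      omega
    have hv1 : 1 ≤ v.natAbs := Nat.one_le_iff_ne_zero.mpr hvne
    have hprodd : ∏ p ∈ v.natAbs.primeFactors, p ∣ v.natAbs := Nat.prod_primeFactors_dvd _
    have hfact : (r + 1)! ≤ v.natAbs :=
      le_trans (aux_fact_le_prod _ (fun p hp => (Nat.prime_of_mem_primeFactors hp).two_le))
        (Nat.le_of_dvd (by omega) hprodd)
    set m0 := r / 2 with hm0_def
    have hpow : m0 ^ m0 ≤ v.natAbs :=
      le_trans (le_trans (aux_pow_le_fact m0) (Nat.factorial_le (by omega))) hfact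
    have hm0R : 2.5 * L ≤ (m0 : ℝ) := by
      have h1 : (r:ℝ) ≤ 2 * (m0:ℝ) + 1 := by exact_mod_cast (by omega : r ≤ 2 * m0 + 1)
      linarith [hcon, hL50]
    have hm0pos : (0:ℝ) < (m0:ℝ) := by linarith
    have hlogv_low : 2.025 * Ln ≤ Real.log (v.natAbs : ℝ) := by
      have h1 : ((m0:ℝ) ^ m0) ≤ (v.natAbs : ℝ) := by exact_mod_cast hpow
      have h2 : Real.log ((m0:ℝ) ^ m0) ≤ Real.log (v.natAbs : ℝ) :=
        Real.log_le_log (by positivity) h1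
      rw [Real.log_pow] at h2
      have h3 : Real.log (2.5 * L) ≤ Real.log (m0:ℝ) :=
        Real.log_le_log (by linarith) hm0R
      have h4 : 2.5 * L * (0.81 * x) ≤ (m0:ℝ) * Real.log (m0:ℝ) :=
        mul_le_mul hm0R (le_trans hlog25L h3) (by positivity) (by positivity)
      have h5 : L * x = Ln := by rw [hL_def]; field_simp
      calc 2.025 * Ln = 2.5 * L * (0.81 * x) := by rw [← h5]; ring
      _ ≤ (m0:ℝ) * Real.log (m0:ℝ) := h4
      _ ≤ Real.log (v.natAbs:ℝ) := h2
    have hup : Real.log (v.natAbs : ℝ) ≤ 2 * Ln := by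
      have h1 : ((v.natAbs : ℕ) : ℝ) = |(v:ℝ)| := by
        simp [Nat.cast_natAbs, Int.cast_abs]
      have h2 : ((v.natAbs : ℕ):ℝ) ≤ (n:ℝ)^2 := by rw [h1]; linarith [hδnB_le, hv]
      have h3 := Real.log_le_log (by exact_mod_cast hv1 : (0:ℝ) < ((v.natAbs:ℕ):ℝ)) h2
      rwa [Real.log_pow, Nat.cast_ofNat] at h3
    linarith [hlogv_low, hup, hLnpos]
  -- fiber bound
  set Fb : ℝ := (26/5:ℝ) ^ k * L ^ k / k ! with hFb_def
  have hFb0 : 0 ≤ Fb := by positivity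
  have fiber_bd : ∀ v : ℤ, |(v:ℝ)| ≤ δ * n * B →
      (((v.natAbs.primeFactors.powersetCard k).card : ℝ)) ≤ Fb := by
    intro v hv
    have hr := omega_bd v hv
    set r := v.natAbs.primeFactors.card with hr_def
    rw [Finset.card_powersetCard, ← hr_def]
    have h1 : r.choose k * k ! ≤ r ^ k := by
      have := Nat.descFactorial_le_pow r k
      rw [Nat.descFactorial_eq_factorial_mul_choose] at this
      simpa [Nat.mul_comm] using this
    have h1' : (r.choose k : ℝ) * k ! ≤ (r:ℝ) ^ k := by exact_mod_cast h1
    have h2 : (r:ℝ) ^ k ≤ (5.2 * L) ^ k := pow_le_pow_left₀ (Nat.cast_nonneg r) hr k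
    have h3 : ((5.2:ℝ) * L) ^ k = (26/5:ℝ)^k * L ^ k := by
      rw [mul_pow]; norm_num
    have hk0 : (0:ℝ) < k ! := by exact_mod_cast Nat.factorial_pos k
    rw [hFb_def, le_div_iff₀ hk0]
    calc (r.choose k : ℝ) * k ! ≤ (r:ℝ)^k := h1'
    _ ≤ (5.2 * L)^k := h2
    _ = (26/5:ℝ)^k * L^k := h3
  -- the bad and good sets
  set Mb : Finset ℕ := M.filter (fun m =>
    distNearestInt ((h : ℝ) * ((((m : ZMod n)⁻¹).val : ℕ) : ℝ) / n) ≤ δ) with hMb_def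
  set M' : Finset ℕ := M \ Mb with hM'_def
  have hMbsub : Mb ⊆ M := Finset.filter_subset _ _
  have hsplit : M'.card = M.card - Mb.card := Finset.card_sdiff_of_subset hMbsub
  have hMbbound : (Mb.card : ℝ) ≤ C / 2 := by
    set lo : ℝ := (-(δ*n*B) - h)/n with hlo_def
    set hi : ℝ := (δ*n*B - h)/n with hhi_def
    set I : Finset ℤ := Finset.Icc ⌈lo⌉ ⌊hi⌋ with hI_def
    set fib : ℤ → Finset ℕ := fun t =>
      (((h:ℤ) + t*(n:ℤ)).natAbs.primeFactors.powersetCard k).image (fun s => ∏ p ∈ s, p)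
      with hfib_def
    have hsub : Mb ⊆ I.biUnion fib := by
      intro m hm
      rw [hMb_def, Finset.mem_filter] at hm
      obtain ⟨hmM, hmd⟩ := hm
      obtain ⟨hm0, hmB, s, hsk, hsp, hse⟩ := hM m hmM
      have hcop : Nat.Coprime m n := by
        rw [hse]
        apply Nat.Coprime.prod_left
        intro p hp
        exact (Nat.Prime.coprime_iff_not_dvd (hsp p hp).1).mpr (hsp p hp).2
      set w : ℕ := ((m : ZMod n)⁻¹).val with hw_def
      have hmod : m * w ≡ 1 [MOD n] := by
        have h1 : ((m:ZMod n)) * ((m:ZMod n))⁻¹ = 1 := ZMod.coe_mul_inv_eq_one m hcop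
        have h2 : ((m * w : ℕ) : ZMod n) = ((1:ℕ) : ZMod n) := by
          rw [Nat.cast_mul, Nat.cast_one, hw_def, ZMod.natCast_zmod_val]
          exact h1
        exact (ZMod.natCast_eq_natCast_iff _ _ n).mp h2
      have hdvd1 : (n:ℤ) ∣ ((m:ℤ) * (w:ℤ) - 1) := by
        have h3 := hmod.dvd
        have h4 := dvd_neg.mpr h3
        rw [neg_sub] at h4
        exact_mod_cast h4
      set Rr : ℤ := round ((h:ℝ) * (w:ℝ) / n) with hRr_def
      set a : ℤ := (h:ℤ) * w - n * Rr with ha_def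
      set v : ℤ := a * m with hv_def
      have habs : |(a:ℝ)| ≤ δ * n := by
        have hdista : ((h:ℝ) * (w:ℝ) / n) - Rr = (a:ℝ)/n := by
          rw [ha_def]; push_cast; field_simp
        have h5 : distNearestInt ((h:ℝ) * (w:ℝ) / n) = |(a:ℝ)| / n := by
          unfold distNearestInt
          rw [← hRr_def, hdista, abs_div, abs_of_pos hnRpos]
        rw [h5, div_le_iff₀ hnRpos] at hmd
        linarith
      have hvdvd : (n:ℤ) ∣ (v - h) := by
        have he : v - (h:ℤ) = (h:ℤ) * ((m:ℤ) * w - 1) - (n:ℤ) * (Rr * m) := by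
          rw [hv_def, ha_def]; ring
        rw [he]
        exact dvd_sub (hdvd1.mul_left _) (Dvd.intro _ rfl)
      obtain ⟨t, ht⟩ := hvdvd
      have hveq : v = (h:ℤ) + t * (n:ℤ) := by linear_combination ht
      have hvabs : |(v:ℝ)| ≤ δ * n * B := by
        have h6 : |(v:ℝ)| = |(a:ℝ)| * m := by
          rw [hv_def]; push_cast
          rw [abs_mul, abs_of_nonneg (by positivity : (0:ℝ) ≤ (m:ℝ))]
        rw [h6]
        have h7 := mul_le_mul habs (le_of_lt hmB) (by positivity) (by positivity)
        linarith
      have habs' := abs_le.mp hvabs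
      have htR : (t:ℝ) = ((v:ℝ) - h)/n := by
        rw [eq_div_iff (ne_of_gt hnRpos)]
        have h8 : ((v - h : ℤ):ℝ) = ((n:ℤ):ℝ) * (t:ℝ) := by exact_mod_cast congrArg Int.cast ht
        push_cast at h8 ⊢
        linarith
      have hmem_t : t ∈ I := by
        rw [hI_def, Finset.mem_Icc]
        constructor
        · rw [Int.ceil_le, htR, hlo_def, div_le_div_iff_of_pos_right hnRpos]
          linarith [habs'.1]
        · rw [Int.le_floor, htR, hhi_def, div_le_div_iff_of_pos_right hnRpos]
          linarith [habs'.2]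
      refine Finset.mem_biUnion.mpr ⟨t, hmem_t, Finset.mem_image.mpr
        ⟨s, Finset.mem_powersetCard.mpr ⟨?_, hsk⟩, hse.symm⟩⟩
      intro p hp
      have hpm : p ∣ m := by rw [hse]; exact Finset.dvd_prod_of_mem _ hp
      have hvne : v ≠ 0 := by
        intro h0
        have h9 : (n:ℤ) ∣ (h:ℤ) := by
          have h10 : (n:ℤ) ∣ v - h := Dvd.intro t ht.symm
          rw [h0, zero_sub] at h10
          exact (dvd_neg.mp h10)
        have hle := Int.le_of_dvd (by exact_mod_cast hh) h9
        have : (n:ℤ) ≤ (h:ℤ) := hle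
        have : n ≤ h := by exact_mod_cast this
        omega
      have hmv : (m:ℤ) ∣ v := by rw [hv_def]; exact dvd_mul_left _ _
      have hmv' : m ∣ v.natAbs := by
        rw [← Int.natAbs_natCast m]
        exact Int.natAbs_dvd_natAbs.mpr hmv
      rw [← hveq]
      exact Nat.mem_primeFactors.mpr
        ⟨(hsp p hp).1, dvd_trans hpm hmv', Int.natAbs_ne_zero.mpr hvne⟩
    have hfib_bd : ∀ t ∈ I, ((fib t).card : ℝ) ≤ Fb := by
      intro t htI
      have h1 : ((fib t).card : ℕ) ≤
          ((((h:ℤ) + t*(n:ℤ)).natAbs.primeFactors.powersetCard k).card : ℕ) :=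
        Finset.card_image_le
      have h2 : ((((h:ℤ) + t*(n:ℤ)).natAbs.primeFactors.powersetCard k).card : ℝ) ≤ Fb := by
        apply fiber_bd
        rw [hI_def, Finset.mem_Icc] at htI
        have hlo1 : lo ≤ (t:ℝ) := le_trans (Int.le_ceil lo) (by exact_mod_cast htI.1)
        have hhi1 : (t:ℝ) ≤ hi := le_trans (by exact_mod_cast htI.2) (Int.floor_le hi)
        have h3 : lo * n = -(δ*n*B) - h := by rw [hlo_def]; field_simp
        have h4 : hi * n = δ*n*B - h := by rw [hhi_def]; field_simp
        have h5 := mul_le_mul_of_nonneg_right hlo1 (le_of_lt hnRpos)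
        have h6 := mul_le_mul_of_nonneg_right hhi1 (le_of_lt hnRpos)
        push_cast
        rw [abs_le]
        constructor <;> nlinarith
      calc ((fib t).card : ℝ) ≤
          ((((h:ℤ) + t*(n:ℤ)).natAbs.primeFactors.powersetCard k).card : ℝ) := by
            exact_mod_cast h1
      _ ≤ Fb := h2
    have hcard3 : (Mb.card : ℝ) ≤ (I.card : ℝ) * Fb := by
      have h1 := Finset.card_le_card hsub
      have h2 := Finset.card_biUnion_le (s := I) (t := fib)
      have h3 : (Mb.card : ℝ) ≤ ∑ t ∈ I, ((fib t).card : ℝ) := by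
        have : (Mb.card : ℕ) ≤ ∑ t ∈ I, (fib t).card := le_trans h1 h2
        exact_mod_cast this
      calc (Mb.card : ℝ) ≤ ∑ t ∈ I, ((fib t).card : ℝ) := h3
      _ ≤ ∑ _t ∈ I, Fb := Finset.sum_le_sum hfib_bd
      _ = (I.card : ℝ) * Fb := by rw [Finset.sum_const, nsmul_eq_mul]
    have hIcard : (I.card : ℝ) ≤ 2 * (δ * B) + 1 := by
      have hhilo : hi - lo = 2 * (δ * B) := by
        rw [hhi_def, hlo_def]
        field_simp
        ring
      rw [hI_def, Int.card_Icc]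
      rcases le_or_gt (⌊hi⌋ + 1 - ⌈lo⌉) 0 with hz | hz
      · rw [Int.toNat_of_nonpos hz]
        have : 0 ≤ δ * B := by positivity
        norm_num
        linarith
      · have h1 : ((⌊hi⌋ + 1 - ⌈lo⌉).toNat : ℝ) = ((⌊hi⌋:ℝ) + 1 - ⌈lo⌉) := by
          have := Int.toNat_of_nonneg (le_of_lt hz)
          exact_mod_cast congrArg (Int.cast : ℤ → ℝ) this
        rw [h1]
        have h2 := Int.floor_le hi
        have h3 := Int.le_ceil lo
        linarith
    have hkfac : (0:ℝ) < (k ! : ℝ) := by exact_mod_cast Nat.factorial_pos k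
    have hy : (26/5:ℝ)^k / (k ! : ℝ) ≤ 100/3 := by
      rw [div_le_iff₀ hkfac]
      exact aux_ratio' k
    have hy0 : 0 ≤ (26/5:ℝ)^k / (k ! : ℝ) := by positivity
    have hδB : δ * B = C * x^k / (200 * Ln^k) := by
      rw [hδ_def]; field_simp
    have hLkC : L^k ≤ C / 200 := by linarith [hCl]
    have hxk0 : (0:ℝ) < x^k := pow_pos hx0 k
    have hLnk0 : (0:ℝ) < Ln^k := pow_pos hLnpos k
    have e1 : 2 * (δ*B) * Fb = (C/100) * ((26/5:ℝ)^k / (k ! : ℝ)) := by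
      rw [hδB, hFb_def, hL_def, div_pow]
      field_simp
      have hxL : x^k * (Ln/x)^k = Ln^k := by
        rw [← mul_pow]; congr 1; field_simp
      linear_combination 200 * hxL
    have e2 : Fb ≤ (C/200) * ((26/5:ℝ)^k / (k ! : ℝ)) := by
      have hFbeq : Fb = L^k * ((26/5:ℝ)^k / (k ! : ℝ)) := by
        rw [hFb_def]; field_simp
      rw [hFbeq]
      exact mul_le_mul_of_nonneg_right (by linarith) hy0
    calc (Mb.card:ℝ) ≤ (I.card:ℝ) * Fb := hcard3
    _ ≤ (2*(δ*B)+1) * Fb := mul_le_mul_of_nonneg_right hIcard hFb0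
    _ = 2*(δ*B)*Fb + Fb := by ring
    _ ≤ (C/100) * ((26/5:ℝ)^k / (k ! : ℝ)) + (C/200) * ((26/5:ℝ)^k / (k ! : ℝ)) := by
        rw [e1]; linarith
    _ ≤ C / 2 := by nlinarith [hy, hy0, hC]
  refine ⟨M', Finset.sdiff_subset, ?_, fun m hm => ?_⟩
  · have hle : Mb.card ≤ M.card := Finset.card_le_card hMbsub
    have : (M'.card : ℝ) = (M.card : ℝ) - Mb.card := by
      rw [hsplit, Nat.cast_sub hle]
    linarith
  · rw [hM'_def, Finset.mem_sdiff] at hm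
    obtain ⟨hmM, hmb⟩ := hm
    rw [hMb_def, Finset.mem_filter] at hmb
    push_neg at hmb
    exact hmb hmM
end

section
/- Let k be a positive integer. For all sufficiently large integers n, every nonzero integer N with |N| < n² has the property that the number of divisors of N that are products of k distinct primes is less than (1/k!)·(4·log n/log log n)^k, and in particular is less than 20·(log n/log log n)^k. -/
/-- `m` is a product of `k` pairwise distinct primes. -/
def IsProdOfKDistinctPrimes (k m : ℕ) : Prop :=
  ∃ s : Finset ℕ, s.card = k ∧ (∀ p ∈ s, p.Prime) ∧ m = ∏ p ∈ s, p

lemma count_le_choose (k m : ℕ) (hm : m ≠ 0) :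
    {d : ℕ | d ∣ m ∧ IsProdOfKDistinctPrimes k d}.ncard ≤ (m.primeFactors.card).choose k := by
  classical
  have hsub : {d : ℕ | d ∣ m ∧ IsProdOfKDistinctPrimes k d} ⊆
      ↑((m.primeFactors.powersetCard k).image fun s => ∏ p ∈ s, p) := by
    rintro d ⟨hdvd, s, hcard, hp, rfl⟩
    simp only [Finset.coe_image, Set.mem_image, Finset.mem_coe, Finset.mem_powersetCard]
    exact ⟨s, ⟨fun p hp' => Nat.mem_primeFactors.2
      ⟨hp p hp', (Finset.dvd_prod_of_mem _ hp').trans hdvd, hm⟩, hcard⟩, rfl⟩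
  calc {d : ℕ | d ∣ m ∧ IsProdOfKDistinctPrimes k d}.ncard
      ≤ ((((m.primeFactors.powersetCard k).image fun s => ∏ p ∈ s, p) : Finset ℕ) : Set ℕ).ncard :=
        Set.ncard_le_ncard hsub (Finset.finite_toSet _)
    _ = ((m.primeFactors.powersetCard k).image fun s => ∏ p ∈ s, p).card :=
        Set.ncard_coe_finset _
    _ ≤ (m.primeFactors.powersetCard k).card := Finset.card_image_le
    _ = (m.primeFactors.card).choose k := Finset.card_powersetCard _ _

lemma four_pow_le (k : ℕ) : (4:ℕ) ^ k ≤ 20 * k.factorial := by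
  induction k with
  | zero => norm_num
  | succ n ih =>
    rcases Nat.lt_or_ge n 3 with h | h
    · interval_cases n <;> decide
    · calc (4:ℕ) ^ (n+1) = 4 ^ n * 4 := by ring
        _ ≤ (20 * n.factorial) * (n + 1) := by
            exact Nat.mul_le_mul ih (by omega)
        _ = 20 * (n+1).factorial := by rw [Nat.factorial_succ]; ring

lemma omega_lt (n : ℕ) (h : 64 ≤ Real.log (Real.log n)) (m : ℕ) (hm : m ≠ 0)
    (hlt : (m:ℝ) < (n:ℝ)^2) :
    (m.primeFactors.card : ℝ) < 4 * Real.log n / Real.log (Real.log n) := by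
  classical
  set L := Real.log n with hLdef
  set LL := Real.log L with hLLdef
  have hLnn : 0 ≤ L := Real.log_natCast_nonneg n
  have hL1 : 1 < L := by
    by_contra hc
    push_neg at hc
    have : LL ≤ 0 := (Real.log_nonpos_iff hLnn).2 hc
    linarith
  have hLpos : 0 < L := by linarith
  have hLLpos : (0:ℝ) < LL := by linarith
  -- L ≥ LL^2/4, hence L/LL ≥ 16
  have hexp : Real.exp LL = L := Real.exp_log hLpos
  have hq : 1 + LL/2 ≤ Real.exp (LL/2) := by
    have := Real.add_one_le_exp (LL/2); linarith
  have hLge : LL^2/4 ≤ L := by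
    have h2 : (1 + LL/2)^2 ≤ (Real.exp (LL/2))^2 := by
      have h0 : (0:ℝ) ≤ 1 + LL/2 := by linarith
      exact pow_le_pow_left₀ h0 hq 2
    rw [← Real.exp_nat_mul] at h2
    have h3 : Real.exp ((2:ℕ) * (LL/2)) = L := by
      rw [show ((2:ℕ):ℝ) * (LL/2) = LL by push_cast; ring, hexp]
    rw [h3] at h2
    nlinarith
  have hrge : 16 ≤ L / LL := by
    rw [le_div_iff₀ hLLpos]
    nlinarith
  -- LLL ≤ LL/4
  have hsq : (8:ℝ) ≤ Real.sqrt LL := by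
    rw [show (8:ℝ) = Real.sqrt 64 by
      rw [show (64:ℝ) = 8^2 by norm_num, Real.sqrt_sq (by norm_num)]]
    exact Real.sqrt_le_sqrt (by linarith)
  have hsqsq : Real.sqrt LL ^ 2 = LL := Real.sq_sqrt hLLpos.le
  have hLLL : Real.log LL ≤ LL / 4 := by
    have h1 : Real.log (Real.sqrt LL) ≤ Real.sqrt LL - 1 :=
      Real.log_le_sub_one_of_pos (by positivity)
    rw [Real.log_sqrt hLLpos.le] at h1
    nlinarith
  -- the threshold T
  set T : ℕ := ⌈L / LL⌉₊ with hTdef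
  have hTge : L / LL ≤ (T:ℝ) := Nat.le_ceil _
  have hTlt : (T:ℝ) < L / LL + 1 := Nat.ceil_lt_add_one (by positivity)
  set P := m.primeFactors with hPdef
  have hsplit : (P.filter (fun p => p ≤ T)).card + (P.filter (fun p => ¬ p ≤ T)).card = P.card :=
    Finset.card_filter_add_card_filter_not _
  -- small primes
  have hsmall : (P.filter (fun p => p ≤ T)).card ≤ T := by
    have : P.filter (fun p => p ≤ T) ⊆ Finset.Icc 2 T := by
      intro p hp
      simp only [Finset.mem_filter] at hp
      exact Finset.mem_Icc.2 ⟨(Nat.prime_of_mem_primeFactors hp.1).two_le, hp.2⟩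
    have := Finset.card_le_card this
    rw [Nat.card_Icc] at this
    omega
  -- large primes
  set q := (P.filter (fun p => ¬ p ≤ T)).card with hqdef
  have hpow : (T+1)^q ≤ m := by
    have h1 : (T+1)^q ≤ ∏ p ∈ P.filter (fun p => ¬ p ≤ T), p := by
      apply Finset.pow_card_le_prod
      intro x hx
      simp only [Finset.mem_filter] at hx
      omega
    have h2 : (∏ p ∈ P.filter (fun p => ¬ p ≤ T), p) ∣ m :=
      (Finset.prod_dvd_prod_of_subset _ _ _ (Finset.filter_subset _ _)).trans
        (Nat.prod_primeFactors_dvd m)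
    exact h1.trans (Nat.le_of_dvd (Nat.pos_of_ne_zero hm) h2)
  have hmpos : (0:ℝ) < (m:ℝ) := by
    exact_mod_cast Nat.pos_of_ne_zero hm
  have hlogm : Real.log ((T+1:ℕ):ℝ) * q ≤ 2 * L := by
    have h1 : (((T+1)^q : ℕ):ℝ) ≤ (m:ℝ) := by exact_mod_cast hpow
    have h2 : Real.log (((T+1)^q : ℕ):ℝ) ≤ Real.log ((n:ℝ)^2) :=
      Real.log_le_log (by positivity) (h1.trans hlt.le)
    rw [Real.log_pow] at h2
    push_cast at h2
    rw [Real.log_pow] at h2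
    push_cast at h2 ⊢
    linarith [h2]
  have hlogT : LL - LL/4 ≤ Real.log ((T+1:ℕ):ℝ) := by
    have h1 : L / LL ≤ ((T+1:ℕ):ℝ) := by push_cast; linarith
    have h2 : Real.log (L / LL) ≤ Real.log ((T+1:ℕ):ℝ) :=
      Real.log_le_log (by positivity) h1
    rw [Real.log_div (by positivity) (by positivity)] at h2
    linarith
  have hqbound : (q:ℝ) ≤ 8/3 * (L / LL) := by
    have h0 : (0:ℝ) ≤ (q:ℝ) := Nat.cast_nonneg _
    have h1 : (3/4 * LL) * q ≤ 2 * L := by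
      calc (3/4 * LL) * (q:ℝ) ≤ Real.log ((T+1:ℕ):ℝ) * q := by
            apply mul_le_mul_of_nonneg_right _ h0
            linarith
        _ ≤ 2 * L := hlogm
    rw [le_div_iff₀ hLLpos] at hrge
    rw [← mul_div_assoc, le_div_iff₀ hLLpos]
    nlinarith
  -- combine
  have hcard : (P.card : ℝ) ≤ (T:ℝ) + (q:ℝ) := by
    have : P.card ≤ T + q := by omega
    exact_mod_cast this
  have : 4 * L / LL = 4 * (L / LL) := by ring
  rw [this]
  have : (1:ℝ) ≤ (1/3) * (L/LL) - 1 := by linarith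
  calc (P.card : ℝ) ≤ (T:ℝ) + (q:ℝ) := hcard
    _ < (L/LL + 1) + 8/3 * (L/LL) := by linarith
    _ < 4 * (L/LL) := by linarith

theorem stmt7 :
    ∀ k : ℕ, 0 < k →
    ∃ n₀ : ℕ, ∀ n : ℕ, n₀ ≤ n →
    ∀ N : ℤ, N ≠ 0 → |N| < (n : ℤ) ^ 2 →
      (({d : ℕ | d ∣ N.natAbs ∧ IsProdOfKDistinctPrimes k d}.ncard : ℕ) : ℝ) <
        (1 / (Nat.factorial k : ℝ)) * (4 * Real.log n / Real.log (Real.log n)) ^ k ∧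
      (({d : ℕ | d ∣ N.natAbs ∧ IsProdOfKDistinctPrimes k d}.ncard : ℕ) : ℝ) <
        20 * (Real.log n / Real.log (Real.log n)) ^ k := by
  intro k hk
  have hev : ∀ᶠ n : ℕ in Filter.atTop, 64 ≤ Real.log (Real.log n) :=
    (Real.tendsto_log_atTop.comp
      (Real.tendsto_log_atTop.comp tendsto_natCast_atTop_atTop)).eventually_ge_atTop 64
  obtain ⟨n₀, hn₀⟩ := Filter.eventually_atTop.mp hev
  refine ⟨n₀, fun n hn N hN habs => ?_⟩
  have h64 := hn₀ n hn
  set m := N.natAbs with hmdef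
  have hm : m ≠ 0 := Int.natAbs_ne_zero.mpr hN
  have hmlt : (m:ℝ) < (n:ℝ)^2 := by
    have : (m:ℤ) < (n:ℤ)^2 := by rwa [Int.abs_eq_natAbs, ← hmdef] at habs
    exact_mod_cast this
  set L := Real.log n with hLdef
  set LL := Real.log L with hLLdef
  -- positivity facts
  have hLnn : 0 ≤ L := Real.log_natCast_nonneg n
  have hL1 : 1 < L := by
    by_contra hc
    push_neg at hc
    have : LL ≤ 0 := (Real.log_nonpos_iff hLnn).2 hc
    linarith
  have hLLpos : (0:ℝ) < LL := by linarith
  have hLpos : (0:ℝ) < L := by linarith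
  have hypos : (0:ℝ) < L / LL := by positivity
  have hω := omega_lt n h64 m hm hmlt
  set c := m.primeFactors.card with hcdef
  have hcount : (({d : ℕ | d ∣ m ∧ IsProdOfKDistinctPrimes k d}.ncard : ℕ) : ℝ)
      ≤ ((c:ℝ)^k) / (Nat.factorial k : ℝ) := by
    have h1 : (({d : ℕ | d ∣ m ∧ IsProdOfKDistinctPrimes k d}.ncard : ℕ) : ℝ)
        ≤ ((c.choose k : ℕ) : ℝ) := by exact_mod_cast count_le_choose k m hm
    calc (({d : ℕ | d ∣ m ∧ IsProdOfKDistinctPrimes k d}.ncard : ℕ) : ℝ)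
        ≤ ((c.choose k : ℕ) : ℝ) := h1
      _ ≤ ((c:ℝ)^k) / (Nat.factorial k : ℝ) := by
          have := Nat.choose_le_pow_div (α := ℝ) k c
          simpa using this
  have hfac : (0:ℝ) < (Nat.factorial k : ℝ) := by
    exact_mod_cast Nat.factorial_pos k
  have hpowlt : (c:ℝ)^k < (4 * L / LL)^k := by
    apply pow_lt_pow_left₀ hω (Nat.cast_nonneg _)
    omega
  have hfirst : (({d : ℕ | d ∣ m ∧ IsProdOfKDistinctPrimes k d}.ncard : ℕ) : ℝ) <
      (1 / (Nat.factorial k : ℝ)) * (4 * L / LL) ^ k := by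
    calc (({d : ℕ | d ∣ m ∧ IsProdOfKDistinctPrimes k d}.ncard : ℕ) : ℝ)
        ≤ ((c:ℝ)^k) / (Nat.factorial k : ℝ) := hcount
      _ < ((4 * L / LL)^k) / (Nat.factorial k : ℝ) := by
          gcongr
      _ = (1 / (Nat.factorial k : ℝ)) * (4 * L / LL) ^ k := by ring
  refine ⟨hfirst, hfirst.trans_le ?_⟩
  have hX : (4:ℝ) * L / LL = 4 * (L / LL) := by ring
  rw [hX, mul_pow]
  have h4k : (4:ℝ)^k ≤ 20 * (Nat.factorial k : ℝ) := by
    have := four_pow_le k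
    exact_mod_cast this
  have hy : (0:ℝ) ≤ (L/LL)^k := by positivity
  calc (1 / (Nat.factorial k : ℝ)) * ((4:ℝ)^k * (L/LL)^k)
      = ((4:ℝ)^k / (Nat.factorial k : ℝ)) * (L/LL)^k := by ring
    _ ≤ 20 * (L/LL)^k := by
        apply mul_le_mul_of_nonneg_right _ hy
        rw [div_le_iff₀ hfac]
        linarith
end

section
/- Let n ≥ 2 be an integer and let M be a set of at least n integers, each coprime to n. Then for any residue class a mod n, there is a subset K of M such that the sum over m in K of m̄ is congruent to a modulo n, where m̄ denotes the inverse of m modulo n. -/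
theorem stmt10 :
    ∀ n : ℕ, 2 ≤ n →
    ∀ M : Finset ℤ, n ≤ M.card →
    (∀ m ∈ M, Int.gcd m n = 1) →
    ∀ a : ZMod n, ∃ K ⊆ M, ∑ m ∈ K, ((m : ZMod n))⁻¹ = a := by
  intro n hn M hcard hcop a
  haveI : NeZero n := ⟨by omega⟩
  set f : Finset ℤ → ZMod n := fun K => ∑ m ∈ K, ((m : ZMod n))⁻¹ with hf
  have key : ∀ N : Finset ℤ, (∀ m ∈ N, IsUnit ((m : ZMod n))) →
      (N.powerset.image f) = Finset.univ ∨ N.card + 1 ≤ (N.powerset.image f).card := by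
    intro N
    induction N using Finset.induction_on with
    | empty => intro _; right; simp [f]
    | @insert m N' hm ih =>
      intro hunit
      have hx : IsUnit ((m : ZMod n)) := hunit m (Finset.mem_insert_self _ _)
      set u : ZMod n := ((m : ZMod n))⁻¹ with hu
      have hu' : IsUnit u := IsUnit.of_mul_eq_one (a := u) (m : ZMod n) (ZMod.inv_mul_of_unit _ hx)
      set S' : Finset (ZMod n) := N'.powerset.image f with hS'
      have hS : (insert m N').powerset.image f = S' ∪ S'.image (fun s => u + s) := by
        rw [Finset.powerset_insert, Finset.image_union, Finset.image_image,
          Finset.image_image]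
        congr 1
        apply Finset.image_congr
        intro K hK
        simp only [Finset.mem_coe, Finset.mem_powerset] at hK
        simp only [Function.comp_apply, f]
        rw [Finset.sum_insert (fun h => hm (hK h))]
      have hsub' : S' ⊆ (insert m N').powerset.image f := by
        rw [hS]; exact Finset.subset_union_left
      have hun : ∀ h : S' = Finset.univ, (insert m N').powerset.image f = Finset.univ := by
        intro h
        apply Finset.eq_univ_of_forall
        intro z
        exact hsub' (h.symm ▸ Finset.mem_univ z)
      by_cases hcl : S'.image (fun s => u + s) ⊆ S'
      · left
        apply hun
        have hclosed : ∀ s ∈ S', u + s ∈ S' := by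
          intro s hs
          exact hcl (Finset.mem_image_of_mem _ hs)
        have hiter : ∀ k : ℕ, ∀ s ∈ S', (k : ZMod n) * u + s ∈ S' := by
          intro k
          induction k with
          | zero => intro s hs; simpa using hs
          | succ j ihj =>
            intro s hs
            have : ((j + 1 : ℕ) : ZMod n) * u + s = u + ((j : ZMod n) * u + s) := by
              push_cast; ring
            rw [this]
            exact hclosed _ (ihj s hs)
        have h0 : (0 : ZMod n) ∈ S' := by
          rw [hS']
          exact Finset.mem_image.mpr ⟨∅, by simp, by simp [f]⟩
        apply Finset.eq_univ_of_forall
        intro z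
        have hk : (((z * u⁻¹).val : ℕ) : ZMod n) = z * u⁻¹ :=
          ZMod.natCast_rightInverse (z * u⁻¹)
        have := hiter (z * u⁻¹).val 0 h0
        rw [hk] at this
        have hz : z * u⁻¹ * u + 0 = z := by
          rw [add_zero, mul_assoc, ZMod.inv_mul_of_unit _ hu', mul_one]
        rwa [hz] at this
      · rcases ih (fun m' hm' => hunit m' (Finset.mem_insert_of_mem hm')) with h | h
        · left; exact hun h
        · right
          obtain ⟨y, hy, hyn⟩ := Finset.not_subset.mp hcl
          have hins : insert y S' ⊆ (insert m N').powerset.image f := by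
            rw [hS]
            intro t ht
            rcases Finset.mem_insert.mp ht with rfl | ht
            · exact Finset.mem_union_right _ hy
            · exact Finset.mem_union_left _ ht
          have hc2 : S'.card + 1 ≤ ((insert m N').powerset.image f).card := by
            have := Finset.card_le_card hins
            rwa [Finset.card_insert_of_notMem hyn] at this
          rw [Finset.card_insert_of_notMem hm]
          omega
  have hunits : ∀ m ∈ M, IsUnit ((m : ZMod n)) := by
    intro m hm
    have hcp : IsCoprime m (n : ℤ) := Int.isCoprime_iff_gcd_eq_one.mpr (hcop m hm)
    obtain ⟨c, d, hcd⟩ := hcp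
    apply IsUnit.of_mul_eq_one (c : ZMod n)
    have : ((c * m + d * n : ℤ) : ZMod n) = 1 := by rw [hcd]; exact Int.cast_one
    push_cast at this
    rw [ZMod.natCast_self] at this
    rw [mul_comm]
    simpa using this
  rcases key M hunits with h | h
  · have : a ∈ M.powerset.image f := h ▸ Finset.mem_univ a
    obtain ⟨K, hK, hKa⟩ := Finset.mem_image.mp this
    exact ⟨K, Finset.mem_powerset.mp hK, hKa⟩
  · exfalso
    have hle : (M.powerset.image f).card ≤ n := by
      simpa using Finset.card_le_univ (M.powerset.image f)
    omega
end
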